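/- Let 𝒜 ⊂ M(N,M) and ℬ ⊂ M(M,N) be finite sets of matrices such that for every sequence {Aₙ ∈ 𝒜} there exists a sequence {Bₙ ∈ ℬ} with ‖AₙBₙ⋯A₁B₁‖ → 0 as n → ∞ (path-dependent stabilizability). Then there exist a positive integer k* and μ ∈ (0,1) such that for every sequence {Aₙ ∈ 𝒜} there exist k ≤ k* and matrices B₁,…,B_k ∈ ℬ with ‖A_kB_k⋯A₁B₁‖ ≤ μ < 1. -/
import Mathlib

def prodAB {N M : ℕ} (A : ℕ → Matrix (Fin N) (Fin M) ℝ)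
    (B : ℕ → Matrix (Fin M) (Fin N) ℝ) : ℕ → Matrix (Fin N) (Fin N) ℝ
  | 0 => 1
  | n + 1 => (A (n + 1) * B (n + 1)) * prodAB A B n

lemma prodAB_congrA {N M : ℕ} (A A' : ℕ → Matrix (Fin N) (Fin M) ℝ)
    (B : ℕ → Matrix (Fin M) (Fin N) ℝ) (k : ℕ)
    (h : ∀ i, 1 ≤ i → i ≤ k → A i = A' i) :
    prodAB A B k = prodAB A' B k := by
  induction k with
  | zero => rfl
  | succ n ih =>
    simp only [prodAB]
    rw [h (n+1) (by omega) (by omega), ih (fun i h1 h2 => h i h1 (by omega))]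

theorem stmt_1 (N M : ℕ) (ν : Matrix (Fin N) (Fin N) ℝ → ℝ)
    (hnonneg : ∀ X, 0 ≤ ν X) (hzero : ∀ X, ν X = 0 ↔ X = 0)
    (htri : ∀ X Y, ν (X + Y) ≤ ν X + ν Y)
    (hsmul : ∀ (c : ℝ) (X), ν (c • X) = |c| * ν X)
    (hsub : ∀ X Y, ν (X * Y) ≤ ν X * ν Y)
    (𝒜 : Finset (Matrix (Fin N) (Fin M) ℝ)) (ℬ : Finset (Matrix (Fin M) (Fin N) ℝ))
    (hstab : ∀ A : ℕ → Matrix (Fin N) (Fin M) ℝ, (∀ n, A n ∈ 𝒜) →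
      ∃ B : ℕ → Matrix (Fin M) (Fin N) ℝ, (∀ n, B n ∈ ℬ) ∧
        Filter.Tendsto (fun n => ν (prodAB A B n)) Filter.atTop (nhds 0)) :
    ∃ kstar : ℕ, 1 ≤ kstar ∧ ∃ μ : ℝ, 0 < μ ∧ μ < 1 ∧
      ∀ A : ℕ → Matrix (Fin N) (Fin M) ℝ, (∀ n, A n ∈ 𝒜) →
        ∃ k, 1 ≤ k ∧ k ≤ kstar ∧
          ∃ B : ℕ → Matrix (Fin M) (Fin N) ℝ, (∀ n, B n ∈ ℬ) ∧
            ν (prodAB A B k) ≤ μ := by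
  by_contra hcon
  push_neg at hcon
  -- translate the negation
  have hcon' : ∀ kstar : ℕ, 1 ≤ kstar →
      ∃ A : ℕ → Matrix (Fin N) (Fin M) ℝ, (∀ n, A n ∈ 𝒜) ∧
        ∀ k, 1 ≤ k → k ≤ kstar → ∀ B : ℕ → Matrix (Fin M) (Fin N) ℝ,
          (∀ n, B n ∈ ℬ) → (1/2 : ℝ) < ν (prodAB A B k) := by
    intro kstar hk
    obtain ⟨A, hA, h⟩ := hcon kstar hk (1/2) (by norm_num) (by norm_num)
    exact ⟨A, hA, fun k h1 h2 B hB => h k h1 h2 B hB⟩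
  set T := {x : Matrix (Fin N) (Fin M) ℝ // x ∈ 𝒜} with hT
  let bad : ℕ → Set (ℕ → T) := fun k =>
    {f | ∀ B : ℕ → Matrix (Fin M) (Fin N) ℝ, (∀ n, B n ∈ ℬ) →
      (1/2 : ℝ) < ν (prodAB (fun n => (f n : Matrix (Fin N) (Fin M) ℝ)) B k)}
  have hclosed : ∀ k, IsClosed (bad k) := by
    intro k
    have heq : bad k = (fun f : ℕ → T => fun i : Fin (k+1) => f i) ⁻¹'
        {g : Fin (k+1) → T | ∀ B : ℕ → Matrix (Fin M) (Fin N) ℝ, (∀ n, B n ∈ ℬ) →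
          (1/2 : ℝ) < ν (prodAB
            (fun n => if h : n < k+1 then (g ⟨n, h⟩ : Matrix (Fin N) (Fin M) ℝ) else 0) B k)} := by
      ext f
      simp only [Set.mem_preimage, Set.mem_setOf_eq, bad]
      have key : ∀ B : ℕ → Matrix (Fin M) (Fin N) ℝ,
          prodAB (fun n => if h : n < k+1 then
            ((fun i : Fin (k+1) => f i) ⟨n, h⟩ : Matrix (Fin N) (Fin M) ℝ) else 0) B k
          = prodAB (fun n => (f n : Matrix (Fin N) (Fin M) ℝ)) B k := by
        intro B
        apply prodAB_congrA
        intro i h1 h2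
        rw [dif_pos (by omega)]
      constructor
      · intro hf B hB; rw [key]; exact hf B hB
      · intro hf B hB; rw [← key B]; exact hf B hB
    rw [heq]
    exact (isClosed_discrete _).preimage (continuous_pi fun i => continuous_apply _)
  let C : ℕ → Set (ℕ → T) := fun m => ⋂ k ∈ Set.Icc 1 m, bad k
  have hCclosed : ∀ m, IsClosed (C m) :=
    fun m => isClosed_biInter fun k _ => hclosed k
  have hCne : ∀ m, (C m).Nonempty := by
    intro m
    obtain ⟨A, hA, hAbad⟩ := hcon' (max m 1) (le_max_right _ _)
    refine ⟨fun n => ⟨A n, hA n⟩, ?_⟩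
    simp only [C, Set.mem_iInter]
    intro k hk
    exact fun B hB => hAbad k hk.1 (hk.2.trans (le_max_left _ _)) B hB
  have hdir : Directed (· ⊇ ·) C := by
    have hanti : Antitone C := by
      intro m m' hm
      apply Set.biInter_subset_biInter_left
      exact Set.Icc_subset_Icc_right hm
    exact hanti.directed_ge
  obtain ⟨f, hf⟩ := IsCompact.nonempty_iInter_of_directed_nonempty_isCompact_isClosed
    C hdir hCne (fun m => (hCclosed m).isCompact) hCclosed
  have hfbad : ∀ k, 1 ≤ k → f ∈ bad k := by
    intro k hk
    have := Set.mem_iInter.1 hf k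
    simp only [C, Set.mem_iInter] at this
    exact this k ⟨hk, le_refl k⟩
  obtain ⟨B, hB, htend⟩ := hstab (fun n => (f n : Matrix (Fin N) (Fin M) ℝ)) (fun n => (f n).2)
  have hev := htend.eventually (gt_mem_nhds (by norm_num : (0:ℝ) < 1/2))
  obtain ⟨n₀, hn₀⟩ := Filter.eventually_atTop.1 hev
  have h1 := hfbad (max n₀ 1) (le_max_right _ _) B hB
  have h2 := hn₀ (max n₀ 1) (le_max_left _ _)
  linarith
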